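/- arXiv:1901.07171 — 3 statements merged into one kernel-verified Lean document; each statement's English description precedes it below -/
import Mathlib

section
/- Let 1 ≤ m ≤ n, let Ω be a region (nonempty open connected subset) of ℂ, and let F : Ω → M_n(ℂ) be analytic. Suppose that for each k = 1, …, m, the function z ↦ s_k(F(z)) attains its maximum value on Ω. Then for each k = 1, …, m, the function z ↦ s_k(F(z)) is constant on Ω. -/
open scoped Matrix

/-- The Euclidean norm of a vector in `ℂⁿ`. -/
noncomputable def euclNorm {n : ℕ} (x : Fin n → ℂ) : ℝ :=
  Real.sqrt (∑ i, ‖x i‖ ^ 2)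

/-- The operator norm of a complex `n × n` matrix induced by the Euclidean norm on `ℂⁿ`. -/
noncomputable def opNorm {n : ℕ} (A : Matrix (Fin n) (Fin n) ℂ) : ℝ :=
  ‖(Matrix.toEuclideanCLM (𝕜 := ℂ) A : EuclideanSpace ℂ (Fin n) →L[ℂ] EuclideanSpace ℂ (Fin n))‖

/-- `sval A k` is the `(k+1)`-st singular value `s_{k+1}(A)` of `A`: the nonnegative square
roots of the eigenvalues of `Aᴴ * A`, listed in nonincreasing order.  In particular
`sval A 0 = s₁(A)` is the largest singular value (the operator norm) and
`sval A (n-1) = sₙ(A)` is the smallest. -/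
noncomputable def sval {n : ℕ} (A : Matrix (Fin n) (Fin n) ℂ) (k : Fin n) : ℝ :=
  let f : Fin n → ℝ := fun i =>
    Real.sqrt ((Matrix.isHermitian_conjTranspose_mul_self A).eigenvalues i)
  (f ∘ Tuple.sort f) k.rev

/-- The Frobenius (Hilbert--Schmidt) norm of a complex matrix: `‖T‖_F = (trace (Tᴴ T))^{1/2}`. -/
noncomputable def frobNorm {n : ℕ} (A : Matrix (Fin n) (Fin n) ℂ) : ℝ :=
  Real.sqrt ((Matrix.trace (Aᴴ * A)).re)

attribute [local instance] Matrix.normedAddCommGroup Matrix.normedSpace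


/-!
For `p ≤ n`, the product `s₁ ⋯ sₚ` of the `p` largest singular values of `A` bounds
`‖det (Xᴴ A Y)‖` for all `n × p` matrices `X`, `Y` with orthonormal columns: Cauchy–Binet expands
the determinant over maximal minors, Cauchy–Schwarz bounds it by `det (Yᴴ Aᴴ A Y) ^ (1/2)`, and
writing `Y = U Z` in an eigenbasis `U` of `Aᴴ A` gives `det (Yᴴ Aᴴ A Y) = ∑_S (∏_{i ∈ S} λᵢ) ‖det Z_S‖²`
with `∑_S ‖det Z_S‖² = 1`. Singular vectors of `A` give equality.

Argue by induction on `k`. Let `z₀` maximise `s_k ∘ F` and pick `X`, `Y` attaining the bound for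
`F z₀` and `p = k`. Since `s₁, …, s_{k-1}` are constant, `z ↦ s₁ ⋯ s_k (F z)` is maximal at `z₀`,
where it equals `‖det (Xᴴ F z₀ Y)‖`; it dominates the modulus of the holomorphic function
`z ↦ det (Xᴴ F z Y)`, so by the maximum modulus principle it is constant, hence so is `s_k ∘ F`
(if `s_k (F z₀) = 0`, then `s_k ∘ F` vanishes identically).
-/

open Matrix Finset Function

namespace Matrix

section CauchyBinet

variable {R : Type*} [CommRing R] {α : Type*} [Fintype α] {p : ℕ}

theorem det_mul_eq_sum_prod_mul_det_submatrix [DecidableEq α] (P : Matrix (Fin p) α R)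
    (Q : Matrix α (Fin p) R) :
    (P * Q).det = ∑ φ : Fin p → α, (∏ i, P i (φ i)) * (Q.submatrix φ id).det := by
  have h := (detRowAlternating (R := R) (n := Fin p)).toMultilinearMap.map_sum
    fun i k => P i k • (Q k : Fin p → R)
  simp only [AlternatingMap.coe_multilinearMap, AlternatingMap.map_smul_univ, smul_eq_mul] at h
  convert h using 1
  · congr 1
    ext i j
    simp [mul_apply, Finset.sum_apply]
  · rfl

variable [LinearOrder α]

/-- An injective `φ` factors uniquely as `S.orderEmbOfFin _ ∘ q` with `S` its image and `q`
a bijection. -/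
theorem sum_eq_sum_sum_orderEmbOfFin_comp {M : Type*} [AddCommMonoid M]
    (c : (Fin p → α) → M) (hc : ∀ φ, ¬Injective φ → c φ = 0) :
    ∑ φ, c φ = ∑ S : {S : Finset α // S.card = p}, ∑ q : Fin p → Fin p,
      c (S.1.orderEmbOfFin S.2 ∘ q) := by
  have hinj {φ} (h : c φ ≠ 0) : Injective φ := not_imp_comm.1 (hc φ) h
  rw [← Fintype.sum_prod_type']
  symm
  refine sum_bij_ne_zero (fun Sq _ _ => Sq.1.1.orderEmbOfFin Sq.1.2 ∘ Sq.2)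
    (fun _ _ _ => mem_univ _) ?_ ?_ fun _ _ _ => rfl
  · rintro ⟨S, q⟩ - hq ⟨S', q'⟩ - hq' heq
    have himage {S : {S : Finset α // S.card = p}} {q : Fin p → Fin p}
        (h : c (S.1.orderEmbOfFin S.2 ∘ q) ≠ 0) :
        univ.image (S.1.orderEmbOfFin S.2 ∘ q) = S.1 := by
      rw [← image_image, image_univ_of_surjective
        (Finite.injective_iff_surjective.1 (hinj h).of_comp), image_orderEmbOfFin_univ]
    obtain rfl : S = S' := Subtype.ext ((himage hq).symm.trans (heq ▸ himage hq'))
    obtain rfl : q = q' := funext fun j => (S.1.orderEmbOfFin S.2).injective (congrFun heq j)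
    rfl
  · intro φ _ hφ
    have hcard : (univ.image φ).card = p := by
      rw [card_image_of_injective _ (hinj hφ), card_univ, Fintype.card_fin]
    have hmem (j) : φ j ∈ Set.range ((univ.image φ).orderEmbOfFin hcard) := by simp
    choose q hq using hmem
    exact ⟨(⟨_, hcard⟩, q), mem_univ _, by rwa [show _ ∘ q = φ from funext hq], funext hq⟩

def maxMinor (M : Matrix α (Fin p) R) (S : {S : Finset α // S.card = p}) : R :=
  (M.submatrix (S.1.orderEmbOfFin S.2) id).det

/-- **Cauchy–Binet**. The inner sums of `det_mul_eq_sum_prod_mul_det_submatrix`, grouped by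
image, are that same expansion for the square matrices `(M.submatrix e id)ᵀ * N.submatrix e id`. -/
theorem det_transpose_mul_eq_sum_maxMinor_mul (M N : Matrix α (Fin p) R) :
    (Mᵀ * N).det = ∑ S, M.maxMinor S * N.maxMinor S := by
  rw [det_mul_eq_sum_prod_mul_det_submatrix, sum_eq_sum_sum_orderEmbOfFin_comp]
  · refine sum_congr rfl fun S _ => ?_
    rw [maxMinor, maxMinor, ← det_transpose (M.submatrix _ id), ← det_mul,
      det_mul_eq_sum_prod_mul_det_submatrix]
    rfl
  · intro φ hφ
    obtain ⟨i, j, hij, hne⟩ := not_injective_iff.1 hφ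
    rw [det_zero_of_row_eq hne (by ext; simp [hij]), mul_zero]

theorem maxMinor_diagonal_mul (c : α → R) (M : Matrix α (Fin p) R)
    (S : {S : Finset α // S.card = p}) :
    (diagonal c * M).maxMinor S = (∏ i ∈ S.1, c i) * M.maxMinor S := by
  have h : (diagonal c * M).submatrix (S.1.orderEmbOfFin S.2) id
      = diagonal (c ∘ S.1.orderEmbOfFin S.2) * M.submatrix (S.1.orderEmbOfFin S.2) id := by
    ext
    simp [diagonal_mul]
  rw [maxMinor, h, det_mul, det_diagonal, maxMinor]
  congr 1
  simpa using (prod_map univ (S.1.orderEmbOfFin S.2).toEmbedding c).symm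

theorem det_conjTranspose_mul_eq_sum_star_maxMinor_mul [StarRing R] (M N : Matrix α (Fin p) R) :
    (Mᴴ * N).det = ∑ S, star (M.maxMinor S) * N.maxMinor S := by
  rw [conjTranspose, transpose_map, det_transpose_mul_eq_sum_maxMinor_mul]
  refine sum_congr rfl fun S _ => ?_
  rw [maxMinor, maxMinor, maxMinor, ← det_conjTranspose, ← det_transpose]
  rfl

end CauchyBinet

section RCLike

variable {𝕜 : Type*} [RCLike 𝕜] {α : Type*} [Fintype α] [LinearOrder α] {p : ℕ}

theorem re_det_conjTranspose_mul_self (M : Matrix α (Fin p) 𝕜) :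
    RCLike.re (Mᴴ * M).det = ∑ S, ‖M.maxMinor S‖ ^ 2 := by
  rw [det_conjTranspose_mul_eq_sum_star_maxMinor_mul, map_sum]
  refine sum_congr rfl fun S _ => ?_
  rw [RCLike.star_def, RCLike.conj_mul, ← RCLike.ofReal_pow, RCLike.ofReal_re]

theorem norm_det_conjTranspose_mul_sq_le (M N : Matrix α (Fin p) 𝕜) :
    ‖(Mᴴ * N).det‖ ^ 2 ≤ RCLike.re (Mᴴ * M).det * RCLike.re (Nᴴ * N).det := by
  rw [re_det_conjTranspose_mul_self, re_det_conjTranspose_mul_self,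
    det_conjTranspose_mul_eq_sum_star_maxMinor_mul]
  calc ‖∑ S, star (M.maxMinor S) * N.maxMinor S‖ ^ 2
      ≤ (∑ S, ‖M.maxMinor S‖ * ‖N.maxMinor S‖) ^ 2 := by
        gcongr
        exact (norm_sum_le _ _).trans_eq (by simp only [norm_mul, norm_star])
    _ ≤ _ := sum_mul_sq_le_sq_mul_sq _ _ _

theorem det_conjTranspose_mul_diagonal_mul (d : α → ℝ) (M : Matrix α (Fin p) 𝕜) :
    (Mᴴ * (diagonal (RCLike.ofReal ∘ d) : Matrix α α 𝕜) * M).det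
      = ((∑ S, (∏ i ∈ S.1, d i) * ‖M.maxMinor S‖ ^ 2 : ℝ) : 𝕜) := by
  rw [Matrix.mul_assoc, det_conjTranspose_mul_eq_sum_star_maxMinor_mul]
  push_cast
  refine sum_congr rfl fun S _ => ?_
  rw [maxMinor_diagonal_mul, mul_left_comm, RCLike.star_def, RCLike.conj_mul]
  rfl

end RCLike

theorem differentiableAt_det_mul_mul {𝕜 : Type*} [NontriviallyNormedField 𝕜] {E : Type*}
    [NormedAddCommGroup E] [NormedSpace 𝕜 E] {ι κ : Type*} [Fintype ι] [Fintype κ] [DecidableEq κ]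
    {F : E → Matrix ι ι 𝕜} {z : E} (hF : DifferentiableAt 𝕜 F z) (P : Matrix κ ι 𝕜)
    (Q : Matrix ι κ 𝕜) : DifferentiableAt 𝕜 (fun w => (P * F w * Q).det) z := by
  have hentry (i j : ι) : DifferentiableAt 𝕜 (fun w => F w i j) z :=
    differentiableAt_pi.1 (differentiableAt_pi.1 hF i) j
  simp only [det_apply, mul_apply]
  fun_prop

end Matrix

theorem Fin.val_le_of_strictMono {n p : ℕ} {f : Fin p → Fin n} (hf : StrictMono f) (j : Fin p) :
    (j : ℕ) ≤ f j := by
  have h := card_le_card (s := (Iic j).image f) (t := Iic (f j)) fun _ hx => by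
    obtain ⟨i, hi, rfl⟩ := mem_image.1 hx
    exact mem_Iic.2 (hf.monotone (mem_Iic.1 hi))
  rw [card_image_of_injective _ hf.injective, Fin.card_Iic, Fin.card_Iic] at h
  omega

theorem Finset.prod_le_prod_castLE_of_antitone {R : Type*} [CommSemiring R] [PartialOrder R]
    [IsOrderedRing R] {n p : ℕ} {f : Fin n → R} (hf : Antitone f) (h0 : ∀ i, 0 ≤ f i)
    {T : Finset (Fin n)} (hT : T.card = p) (hp : p ≤ n) :
    ∏ i ∈ T, f i ≤ ∏ j : Fin p, f (Fin.castLE hp j) := by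
  rw [← map_orderEmbOfFin_univ T hT, prod_map]
  exact prod_le_prod (fun _ _ => h0 _) fun j _ =>
    hf (Fin.le_def.2 (by simpa using Fin.val_le_of_strictMono (T.orderEmbOfFin hT).strictMono j))

theorem Complex.eqOn_of_isMaxOn_of_norm_le {E F : Type*} [NormedAddCommGroup E]
    [NormedSpace ℂ E] [NormedAddCommGroup F] [NormedSpace ℂ F] {U : Set E}
    (hc : IsPreconnected U) (ho : IsOpen U) {f : E → F} {P : E → ℝ}
    (hd : DifferentiableOn ℂ f U) {c : E} (hcU : c ∈ U) (hP : IsMaxOn P U c)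
    (hle : ∀ z ∈ U, ‖f z‖ ≤ P z) (heq : ‖f c‖ = P c) :
    Set.EqOn P (Function.const E (P c)) U := by
  have hmax : IsMaxOn (norm ∘ f) U c :=
    isMaxOn_iff.2 fun z hz => (hle z hz).trans ((hP hz).trans heq.ge)
  intro z hz
  have hnorm : ‖f z‖ = ‖f c‖ := Complex.norm_eqOn_of_isPreconnected_of_isMaxOn hc ho hd hcU hmax hz
  exact le_antisymm (hP hz) (heq ▸ hnorm ▸ hle z hz)

section SingularValues

variable {n p : ℕ}

local notation "λ[" A "]" => Matrix.IsHermitian.eigenvalues (isHermitian_conjTranspose_mul_self A)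

/-- `sval A k = √(λ[A] (svalPerm A k))`. -/
noncomputable def svalPerm (A : Matrix (Fin n) (Fin n) ℂ) : Equiv.Perm (Fin n) :=
  Fin.revPerm.trans (Tuple.sort fun i => √(λ[A] i))

theorem sval_nonneg (A : Matrix (Fin n) (Fin n) ℂ) (k : Fin n) : 0 ≤ sval A k :=
  Real.sqrt_nonneg _

theorem sq_sval (A : Matrix (Fin n) (Fin n) ℂ) (k : Fin n) :
    sval A k ^ 2 = λ[A] (svalPerm A k) :=
  Real.sq_sqrt (eigenvalues_conjTranspose_mul_self_nonneg A _)

theorem sval_antitone (A : Matrix (Fin n) (Fin n) ℂ) : Antitone (sval A) :=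
  fun _ _ h => Tuple.monotone_sort (fun i => √(λ[A] i)) (Fin.rev_le_rev.2 h)

theorem prod_eigenvalues_le_prod_sval_sq (A : Matrix (Fin n) (Fin n) ℂ) (hp : p ≤ n)
    {S : Finset (Fin n)} (hS : S.card = p) :
    ∏ i ∈ S, λ[A] i ≤ ∏ j : Fin p, sval A (Fin.castLE hp j) ^ 2 := by
  have h : ∏ i ∈ S, λ[A] i = ∏ k ∈ S.map (svalPerm A).symm.toEmbedding, sval A k ^ 2 := by
    simp [sq_sval]
  rw [h]
  exact prod_le_prod_castLE_of_antitone
    (fun _ _ h => pow_le_pow_left₀ (sval_nonneg _ _) (sval_antitone A h) 2)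
    (fun _ => sq_nonneg _) (by rw [card_map, hS]) hp

theorem norm_det_conjTranspose_mul_mul_le_prod_sval (A : Matrix (Fin n) (Fin n) ℂ) (hp : p ≤ n)
    {X Y : Matrix (Fin n) (Fin p) ℂ} (hX : Xᴴ * X = 1) (hY : Yᴴ * Y = 1) :
    ‖(Xᴴ * A * Y).det‖ ≤ ∏ j : Fin p, sval A (Fin.castLE hp j) := by
  set hH := isHermitian_conjTranspose_mul_self A
  set U : Matrix (Fin n) (Fin n) ℂ := ↑hH.eigenvectorUnitary
  set Z := Uᴴ * Y
  have hU : U * Uᴴ = 1 := mem_unitaryGroup_iff.1 hH.eigenvectorUnitary.2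
  have hZ : Zᴴ * Z = 1 := by
    rw [conjTranspose_mul, conjTranspose_conjTranspose, Matrix.mul_assoc, ← Matrix.mul_assoc U,
      hU, Matrix.one_mul, hY]
  have hAY : (A * Y)ᴴ * (A * Y)
      = Zᴴ * (diagonal (RCLike.ofReal ∘ λ[A]) : Matrix (Fin n) (Fin n) ℂ) * Z := by
    have h : Aᴴ * A = U * diagonal (RCLike.ofReal ∘ λ[A]) * Uᴴ := hH.spectral_theorem
    calc (A * Y)ᴴ * (A * Y) = Yᴴ * (Aᴴ * A) * Y := by
          simp only [conjTranspose_mul, Matrix.mul_assoc]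
      _ = _ := by simp only [h, Z, conjTranspose_mul, conjTranspose_conjTranspose, Matrix.mul_assoc]
  have hCS : ‖(Xᴴ * (A * Y)).det‖ ^ 2
      ≤ RCLike.re (Zᴴ * (diagonal (RCLike.ofReal ∘ λ[A]) : Matrix (Fin n) (Fin n) ℂ) * Z).det := by
    have h := norm_det_conjTranspose_mul_sq_le X (A * Y)
    rwa [hX, det_one, RCLike.one_re, one_mul, hAY] at h
  have hbound : RCLike.re (Zᴴ * (diagonal (RCLike.ofReal ∘ λ[A]) : Matrix (Fin n) (Fin n) ℂ) * Z).det
      ≤ (∏ j : Fin p, sval A (Fin.castLE hp j)) ^ 2 := by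
    rw [det_conjTranspose_mul_diagonal_mul, RCLike.ofReal_re, ← prod_pow]
    calc ∑ S, (∏ i ∈ S.1, λ[A] i) * ‖Z.maxMinor S‖ ^ 2
        ≤ ∑ S, (∏ j : Fin p, sval A (Fin.castLE hp j) ^ 2) * ‖Z.maxMinor S‖ ^ 2 := by
          gcongr with S
          exact prod_eigenvalues_le_prod_sval_sq A hp S.2
      _ = ∏ j : Fin p, sval A (Fin.castLE hp j) ^ 2 := by
          rw [← mul_sum, ← re_det_conjTranspose_mul_self, hZ, det_one, RCLike.one_re, mul_one]
  rw [Matrix.mul_assoc, ← pow_le_pow_iff_left₀ (norm_nonneg _)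
    (prod_nonneg fun j _ => sval_nonneg A _) two_ne_zero]
  exact hCS.trans hbound

/-- `Y` has the top `p` right singular vectors of `A` as columns, and `X := A Y diag(s)⁻¹`. -/
theorem exists_det_conjTranspose_mul_mul_eq_prod_sval (A : Matrix (Fin n) (Fin n) ℂ)
    (hp : p ≤ n) (hpos : ∀ j : Fin p, 0 < sval A (Fin.castLE hp j)) :
    ∃ X Y : Matrix (Fin n) (Fin p) ℂ, Xᴴ * X = 1 ∧ Yᴴ * Y = 1 ∧
      (Xᴴ * A * Y).det = ∏ j : Fin p, (sval A (Fin.castLE hp j) : ℂ) := by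
  set hH := isHermitian_conjTranspose_mul_self A
  set U : Matrix (Fin n) (Fin n) ℂ := ↑hH.eigenvectorUnitary
  set m : Fin p → Fin n := svalPerm A ∘ Fin.castLE hp
  have hm : Injective m := (svalPerm A).injective.comp (Fin.castLE_injective hp)
  set s : Fin p → ℂ := fun j => sval A (Fin.castLE hp j)
  have hs (j : Fin p) : s j ≠ 0 := Complex.ofReal_ne_zero.2 (hpos j).ne'
  set Y := U.submatrix id m
  have hUU : Uᴴ * U = 1 := mem_unitaryGroup_iff'.1 hH.eigenvectorUnitary.2
  have hUAU : Uᴴ * (Aᴴ * A) * U = diagonal (RCLike.ofReal ∘ λ[A]) := by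
    simpa [star_eq_conjTranspose] using hH.conjStarAlgAut_star_eigenvectorUnitary
  have hY : Yᴴ * Y = 1 := by
    rw [conjTranspose_submatrix, ← submatrix_mul _ _ _ id _ bijective_id, hUU, submatrix_one _ hm]
  have hAY : (A * Y)ᴴ * (A * Y) = diagonal fun j => s j ^ 2 := by
    calc (A * Y)ᴴ * (A * Y) = (Uᴴ * (Aᴴ * A) * U).submatrix m m := by
          rw [submatrix_mul _ _ m id m bijective_id, submatrix_mul _ _ m id id bijective_id,
            submatrix_id_id, conjTranspose_mul, conjTranspose_submatrix]
          simp only [Y, Matrix.mul_assoc]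
      _ = _ := by
          rw [hUAU, submatrix_diagonal _ _ hm]
          congr 1
          ext j
          simp [s, m, ← sq_sval]
  set X := A * Y * diagonal fun j => (s j)⁻¹
  have hXAY : Xᴴ * A * Y = diagonal s := by
    have hstar : star (fun j => (s j)⁻¹) = fun j => (s j)⁻¹ := by
      ext j
      simp [s]
    rw [conjTranspose_mul, diagonal_conjTranspose, hstar, Matrix.mul_assoc, Matrix.mul_assoc,
      hAY, diagonal_mul_diagonal]
    congr 1
    ext j
    field_simp [hs j]
  refine ⟨X, Y, ?_, hY, by rw [hXAY, det_diagonal]⟩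
  rw [← Matrix.mul_assoc, ← Matrix.mul_assoc, hXAY, diagonal_mul_diagonal]
  simp [hs]

end SingularValues

theorem sval_eq_of_isMaxOn {n : ℕ} {Ω : Set ℂ} (hΩ : IsOpen Ω) (hconn : IsPreconnected Ω)
    {F : ℂ → Matrix (Fin n) (Fin n) ℂ} (hF : ∀ z ∈ Ω, DifferentiableAt ℂ F z) {k : Fin n}
    {z₀ : ℂ} (hz₀ : z₀ ∈ Ω) (hmax : ∀ z ∈ Ω, sval (F z) k ≤ sval (F z₀) k)
    (hlow : ∀ j < k, ∀ z ∈ Ω, sval (F z) j = sval (F z₀) j) :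
    ∀ z ∈ Ω, sval (F z) k = sval (F z₀) k := by
  rcases (sval_nonneg (F z₀) k).eq_or_lt with h0 | hpos
  · exact fun z hz => le_antisymm (hmax z hz) (h0 ▸ sval_nonneg _ _)
  have hp : (k : ℕ) + 1 ≤ n := k.isLt
  have hsval_pos {j : Fin n} (hj : j ≤ k) : 0 < sval (F z₀) j := hpos.trans_le (sval_antitone _ hj)
  obtain ⟨C, hC, hprod⟩ : ∃ C > 0, ∀ z ∈ Ω,
      ∏ j : Fin (k + 1), sval (F z) (Fin.castLE hp j) = C * sval (F z) k := by
    refine ⟨∏ j : Fin k, sval (F z₀) (Fin.castLE hp j.castSucc),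
      prod_pos fun j _ => hsval_pos (Fin.le_def.2 j.isLt.le), fun z hz => ?_⟩
    rw [Fin.prod_univ_castSucc, show Fin.castLE hp (Fin.last k) = k from Fin.ext rfl]
    exact congrArg (· * _) (prod_congr rfl fun j _ => hlow _ (Fin.lt_def.2 j.isLt) z hz)
  obtain ⟨X, Y, hX, hY, hdet⟩ := exists_det_conjTranspose_mul_mul_eq_prod_sval (F z₀) hp
    fun j => hsval_pos (Fin.le_def.2 (Nat.lt_succ_iff.1 j.isLt))
  have hconst := Complex.eqOn_of_isMaxOn_of_norm_le hconn hΩ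
    (f := fun z => (Xᴴ * F z * Y).det)
    (P := fun z => ∏ j : Fin (k + 1), sval (F z) (Fin.castLE hp j))
    (fun z hz => (differentiableAt_det_mul_mul (hF z hz) Xᴴ Y).differentiableWithinAt) hz₀
    (isMaxOn_iff.2 fun z hz => by
      rw [hprod z hz, hprod z₀ hz₀]
      exact mul_le_mul_of_nonneg_left (hmax z hz) hC.le)
    (fun z _ => norm_det_conjTranspose_mul_mul_le_prod_sval (F z) hp hX hY)
    (by rw [hdet, ← Complex.ofReal_prod, Complex.norm_real,
      Real.norm_of_nonneg (prod_nonneg fun j _ => sval_nonneg _ _)])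
  intro z hz
  have h := hconst hz
  simp only [Function.const_apply, hprod z hz, hprod z₀ hz₀] at h
  exact mul_left_cancel₀ hC.ne' h

theorem max_singular_values_constant_general {n m : ℕ}
    (Ω : Set ℂ) (hΩ : IsOpen Ω) (hconn : IsConnected Ω)
    (F : ℂ → Matrix (Fin n) (Fin n) ℂ) (hF : ∀ z ∈ Ω, DifferentiableAt ℂ F z)
    (hmax : ∀ k : Fin n, (k : ℕ) < m → ∃ zk ∈ Ω, ∀ z ∈ Ω, sval (F z) k ≤ sval (F zk) k) :
    ∀ k : Fin n, (k : ℕ) < m → ∀ z ∈ Ω, ∀ w ∈ Ω, sval (F z) k = sval (F w) k := by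
  intro k
  induction k using WellFoundedLT.induction with
  | ind k ih =>
    intro hk z hz w hw
    obtain ⟨z₀, hz₀, hmax₀⟩ := hmax k hk
    have hconst := sval_eq_of_isMaxOn hΩ hconn.isPreconnected hF hz₀ hmax₀
      fun j hj z hz => ih j hj (lt_trans (Fin.lt_def.1 hj) hk) z hz z₀ hz₀
    rw [hconst z hz, hconst w hw]

/-- If `F` is analytic on a region `Ω`, `1 ≤ m ≤ n`, and for each `k = 1, …, m` the function
`z ↦ s_k(F z)` attains its maximum value on `Ω`, then each `z ↦ s_k(F z)`, `k = 1, …, m`, is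
constant on `Ω`.  (Here `k = 1, …, m` corresponds to indices `k : Fin n` with `(k : ℕ) < m`.) -/
theorem max_singular_values_constant {n m : ℕ} (hm : 1 ≤ m) (hmn : m ≤ n)
    (Ω : Set ℂ) (hΩ : IsOpen Ω) (hconn : IsConnected Ω)
    (F : ℂ → Matrix (Fin n) (Fin n) ℂ) (hF : ∀ z ∈ Ω, DifferentiableAt ℂ F z)
    (hmax : ∀ k : Fin n, (k : ℕ) < m → ∃ zk ∈ Ω, ∀ z ∈ Ω, sval (F z) k ≤ sval (F zk) k) :
    ∀ k : Fin n, (k : ℕ) < m → ∀ z ∈ Ω, ∀ w ∈ Ω, sval (F z) k = sval (F w) k :=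
  max_singular_values_constant_general Ω hΩ hconn F hF hmax
end

section
/- Let Ω be a region (nonempty open connected subset) of ℂ and let F : Ω → M_n(ℂ) be analytic. Suppose there is z₀ ∈ Ω such that ‖F(z)‖ ≤ ‖F(z₀)‖ for all z ∈ Ω, where ‖·‖ is the operator norm, and let d = dim{x ∈ ℂⁿ : ‖F(z₀)x‖ = ‖F(z₀)‖·‖x‖}, the dimension of the subspace of vectors at which F(z₀) attains its norm. Then there exist constant n×n unitary matrices U and V such that: if d = n, then F(z) = ‖F(z₀)‖·U·V for all z ∈ Ω; and if d < n, then there is an analytic function R : Ω → M_{n-d}(ℂ) such that F(z) = U · [[‖F(z₀)‖·I_d, 0], [0, R(z)]] · V for all z ∈ Ω. In particular, for every x with ‖F(z₀)x‖ = ‖F(z₀)‖·‖x‖, the map z ↦ F(z)x is constant on Ω and F^{(k)}(z₀)x = 0 for all k ≥ 1. -/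
open scoped Matrix

attribute [local instance] Matrix.normedAddCommGroup Matrix.normedSpace

/-! For a maximizing vector `x`, `z ↦ F z x` is analytic with values in a strictly convex space
and `‖F z x‖ ≤ ‖F z₀‖ ‖x‖ = ‖F z₀ x‖`, so it is constant by the maximum modulus principle.
Take an orthonormal basis `b` whose first `d` vectors maximize `F z₀`; then the vectors
`c i = ‖F z₀‖⁻¹ F z₀ (b i)` are orthonormal too and extend to a basis `c`, and
`F z (b i) = ‖F z₀‖ c i` for every `z`. Since `‖F z‖ ≤ ‖F z₀‖`, the equality case of
`‖(F z)ᴴ (c i)‖ ≤ ‖F z₀‖` also gives `(F z)ᴴ (c i) = ‖F z₀‖ b i`. So in the bases `b`, `c` the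
first `d` rows and columns of `F z` are those of `‖F z₀‖ • 1`, which is the block form. -/

open scoped InnerProductSpace
open ContinuousLinearMap Module

section InnerProductSpace

variable {𝕜 E F : Type*} [RCLike 𝕜] [NormedAddCommGroup E] [InnerProductSpace 𝕜 E]
  [NormedAddCommGroup F] [InnerProductSpace 𝕜 F]

/-- Expanding `‖T† c - M b‖²` with `re ⟪T† c, b⟫ = re ⟪c, T b⟫ = M ‖c‖²` shows it is `≤ 0`. -/
theorem ContinuousLinearMap.adjoint_apply_eq_smul_of_apply_eq_smul [CompleteSpace E]
    [CompleteSpace F] {T : E →L[𝕜] F} {M : ℝ} (hT : ‖T‖ ≤ M) {b : E} {c : F} (hbc : ‖b‖ = ‖c‖)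
    (h : T b = (M : 𝕜) • c) : adjoint T c = (M : 𝕜) • b := by
  have hM : 0 ≤ M := (norm_nonneg T).trans hT
  have hnorm : ‖adjoint T c‖ ≤ M * ‖c‖ :=
    calc ‖adjoint T c‖ ≤ ‖adjoint T‖ * ‖c‖ := (adjoint T).le_opNorm c
      _ ≤ M * ‖c‖ := by rw [LinearIsometryEquiv.norm_map]; gcongr
  have hinner : RCLike.re ⟪adjoint T c, (M : 𝕜) • b⟫_𝕜 = M ^ 2 * ‖c‖ ^ 2 := by
    rw [adjoint_inner_left, map_smul, h, inner_smul_right, inner_smul_right,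
      inner_self_eq_norm_sq_to_K]
    simp only [← RCLike.ofReal_pow, ← RCLike.ofReal_mul, RCLike.ofReal_re]
    ring
  have hsq : ‖adjoint T c - (M : 𝕜) • b‖ ^ 2 ≤ 0 := by
    rw [@norm_sub_sq 𝕜, hinner, norm_smul, RCLike.norm_ofReal, abs_of_nonneg hM, hbc]
    nlinarith [mul_le_mul hnorm hnorm (norm_nonneg _) (by positivity)]
  rw [← sub_eq_zero, ← norm_eq_zero]
  exact pow_eq_zero_iff two_ne_zero |>.mp (le_antisymm hsq (by positivity))

theorem Orthonormal.inv_smul_apply_of_norm_apply_eq [CompleteSpace E] [CompleteSpace F] {ι : Type*}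
    {T : E →L[𝕜] F} {M : ℝ} (hT : ‖T‖ ≤ M) (hM : 0 < M) {v : ι → E} (hv : Orthonormal 𝕜 v)
    (hmax : ∀ i, ‖T (v i)‖ = M) : Orthonormal 𝕜 fun i => (M⁻¹ : 𝕜) • T (v i) := by
  classical
  have hM' : (M : 𝕜) ≠ 0 := RCLike.ofReal_ne_zero.mpr hM.ne'
  have hadj : ∀ i, adjoint T ((M⁻¹ : 𝕜) • T (v i)) = (M : 𝕜) • v i := fun i =>
    T.adjoint_apply_eq_smul_of_apply_eq_smul hT
      (by simp [norm_smul, hmax, hv.1 i, abs_of_pos hM, hM.ne'])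
      (by rw [smul_smul, mul_inv_cancel₀ hM', one_smul])
  rw [orthonormal_iff_ite] at hv ⊢
  intro i j
  rw [inner_smul_right, ← adjoint_inner_left, hadj, inner_smul_left, RCLike.conj_ofReal,
    inv_mul_cancel_left₀ hM', hv]

theorem exists_orthonormalBasis_apply_eq_smul [FiniteDimensional 𝕜 E] {ι : Type*} [Fintype ι]
    (hE : finrank 𝕜 E = Fintype.card ι) {T : E →L[𝕜] E} {M : ℝ} (hT : ‖T‖ ≤ M) {s : Set ι}
    {v : ι → E} (hv : Orthonormal 𝕜 (s.domRestrict v)) (hmax : ∀ i ∈ s, ‖T (v i)‖ = M) :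
    ∃ b c : OrthonormalBasis ι 𝕜 E, ∀ i ∈ s, T (b i) = (M : 𝕜) • c i := by
  have := FiniteDimensional.complete 𝕜 E
  obtain ⟨b, hb⟩ := hv.exists_orthonormalBasis_extension_of_card_eq hE
  rcases (norm_nonneg T).trans hT |>.eq_or_lt with hM | hM
  · have hT0 : T = 0 := norm_le_zero_iff.mp (hM ▸ hT)
    exact ⟨b, b, fun i _ => by simp [hT0, ← hM]⟩
  have hbmax : ∀ i : s, ‖T (s.domRestrict b i)‖ = M := fun i => by
    simp [hb i i.2, hmax i i.2]
  have hbs : s.domRestrict b = s.domRestrict v := funext fun i => hb i i.2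
  obtain ⟨c, hc⟩ := (hbs ▸ hv).inv_smul_apply_of_norm_apply_eq hT hM hbmax
    |>.exists_orthonormalBasis_extension_of_card_eq (v := fun i => (M⁻¹ : 𝕜) • T (b i)) hE
  refine ⟨b, c, fun i hi => ?_⟩
  rw [hc i hi, smul_smul, mul_inv_cancel₀ (RCLike.ofReal_ne_zero.mpr hM.ne'), one_smul]

theorem Submodule.exists_orthonormal_domRestrict_lt_finrank (K : Submodule 𝕜 E)
    [FiniteDimensional 𝕜 K] (n : ℕ) :
    ∃ v : Fin n → E, Orthonormal 𝕜 ({i : Fin n | i.val < finrank 𝕜 K}.domRestrict v) ∧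
      ∀ i : Fin n, i.val < finrank 𝕜 K → v i ∈ K := by
  set u := stdOrthonormalBasis 𝕜 K
  let v : Fin n → E := fun i => if h : i.val < finrank 𝕜 K then (u ⟨i, h⟩ : E) else 0
  let g : {i : Fin n | i.val < finrank 𝕜 K} → Fin (finrank 𝕜 K) := fun i => ⟨i.1, i.2⟩
  have hg : Function.Injective g := fun i j h => Subtype.ext (Fin.ext (Fin.mk.inj_iff.mp h))
  refine ⟨v, ?_, fun i hi => by simp [v, hi]⟩
  convert (u.orthonormal.comp_linearIsometry K.subtypeₗᵢ).comp g hg using 1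
  ext i
  exact dif_pos i.2

end InnerProductSpace

theorem Complex.eqOn_apply_of_norm_apply_eq {E F : Type*} [NormedAddCommGroup E]
    [NormedSpace ℂ E] [NormedAddCommGroup F] [NormedSpace ℂ F] [StrictConvexSpace ℝ F]
    {T : ℂ → E →L[ℂ] F} {Ω : Set ℂ} (hΩ : IsOpen Ω) (hΩc : IsPreconnected Ω)
    (hT : DifferentiableOn ℂ T Ω) {z₀ : ℂ} (hz₀ : z₀ ∈ Ω) {M : ℝ} (hM : ∀ z ∈ Ω, ‖T z‖ ≤ M)
    {x : E} (hx : ‖T z₀ x‖ = M * ‖x‖) :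
    Set.EqOn (fun z => T z x) (fun _ => T z₀ x) Ω := by
  refine Complex.eqOn_of_isPreconnected_of_isMaxOn_norm hΩc hΩ
    (fun z hz => (hT z hz).clm_apply (differentiableWithinAt_const x)) hz₀ fun z hz => ?_
  calc ‖T z x‖ ≤ ‖T z‖ * ‖x‖ := (T z).le_opNorm x
    _ ≤ M * ‖x‖ := by gcongr; exact hM z hz
    _ = ‖T z₀ x‖ := hx.symm

theorem ContinuousLinearMap.iteratedDeriv_comp_left {𝕜 F G : Type*} [NontriviallyNormedField 𝕜]
    [NormedAddCommGroup F] [NormedSpace 𝕜 F] [NormedAddCommGroup G] [NormedSpace 𝕜 G]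
    (g : F →L[𝕜] G) {f : 𝕜 → F} {x : 𝕜} {n : WithTop ℕ∞} (hf : ContDiffAt 𝕜 n f x) {i : ℕ}
    (hi : i ≤ n) : iteratedDeriv i (g ∘ f) x = g (iteratedDeriv i f x) := by
  simp [iteratedDeriv, g.iteratedFDeriv_comp_left hf hi]

theorem DifferentiableAt.matrix_submatrix_mul_mul {𝕜 E l m n o p q : Type*}
    [NontriviallyNormedField 𝕜] [CompleteSpace 𝕜] [NormedAddCommGroup E] [NormedSpace 𝕜 E]
    [Fintype l] [Fintype m] [Fintype n] [Fintype o] [Fintype p] [Fintype q]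
    (X : Matrix p m 𝕜) (Y : Matrix n q 𝕜) (f : l → p) (g : o → q) {A : E → Matrix m n 𝕜} {z : E}
    (hA : DifferentiableAt 𝕜 A z) :
    DifferentiableAt 𝕜 (fun z => (X * A z * Y).submatrix f g) z :=
  let L : Matrix m n 𝕜 →ₗ[𝕜] Matrix l o 𝕜 :=
    { toFun := fun A => (X * A * Y).submatrix f g
      map_add' := fun A B => by simp [Matrix.mul_add, Matrix.add_mul, Matrix.submatrix_add]
      map_smul' := fun c A => by simp [Matrix.submatrix_smul] }
  (LinearMap.toContinuousLinearMap L).differentiableAt.comp z hA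

theorem euclNorm_eq_norm_toLp {n : ℕ} (x : Fin n → ℂ) : euclNorm x = ‖WithLp.toLp 2 x‖ :=
  (EuclideanSpace.norm_eq _).symm

namespace Matrix

theorem eq_reindex_fromBlocks_diagonal {α κ ν m : Type*} [Zero α] [DecidableEq κ]
    [DecidableEq m] (e : κ ⊕ ν ≃ m) (K : Matrix m m α) (c : α) {s : Set m}
    (hs : ∀ i, e (.inl i) ∈ s) (hK : ∀ i j, i ∈ s ∨ j ∈ s → K i j = if i = j then c else 0) :
    K = reindex e e (fromBlocks (diagonal fun _ => c) 0 0
      (K.submatrix (e ∘ .inr) (e ∘ .inr))) := by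
  ext i j
  obtain ⟨a, rfl⟩ := e.surjective i
  obtain ⟨b, rfl⟩ := e.surjective j
  rcases a with a | a <;> rcases b with b | b
  · simp [hK _ _ (.inl (hs a)), diagonal_apply]
  · simp [hK _ _ (.inl (hs a))]
  · simp [hK _ _ (.inr (hs b))]
  · simp

theorem iteratedDeriv_mulVec_eq_zero {𝕜 : Type*} [NontriviallyNormedField 𝕜] [CompleteSpace 𝕜]
    {m l : Type*} [Fintype m] [Fintype l] [DecidableEq l] {F : 𝕜 → Matrix m l 𝕜} {z₀ : 𝕜}
    {k : ℕ} (hF : ContDiffAt 𝕜 k F z₀) (hk : k ≠ 0) {x : l → 𝕜}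
    (hx : (fun z => F z *ᵥ x) =ᶠ[nhds z₀] fun _ => F z₀ *ᵥ x) : iteratedDeriv k F z₀ *ᵥ x = 0 := by
  let L : Matrix m l 𝕜 →L[𝕜] (m → 𝕜) :=
    LinearMap.toContinuousLinearMap (LinearMap.applyₗ x ∘ₗ toLin'.toLinearMap)
  calc iteratedDeriv k F z₀ *ᵥ x = iteratedDeriv k (L ∘ F) z₀ :=
        (L.iteratedDeriv_comp_left hF le_rfl).symm
    _ = iteratedDeriv k (fun _ => F z₀ *ᵥ x) z₀ := hx.iteratedDeriv_eq k
    _ = 0 := by simp [iteratedDeriv_const, hk]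

section RCLike

variable {𝕜 ι : Type*} [RCLike 𝕜] [Fintype ι] [DecidableEq ι]

theorem conjTranspose_toMatrix_mul_mul_toMatrix_apply (A : Matrix ι ι 𝕜)
    (b c : OrthonormalBasis ι 𝕜 (EuclideanSpace 𝕜 ι)) (i j : ι) :
    (((EuclideanSpace.basisFun ι 𝕜).toBasis.toMatrix c)ᴴ * A *
      (EuclideanSpace.basisFun ι 𝕜).toBasis.toMatrix b) i j =
      ⟪c i, toEuclideanCLM (𝕜 := 𝕜) A (b j)⟫_𝕜 := by
  simp only [mul_apply, Module.Basis.toMatrix_apply, OrthonormalBasis.coe_toBasis_repr_apply,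
    EuclideanSpace.basisFun_repr, conjTranspose_apply, EuclideanSpace.inner_eq_star_dotProduct,
    ofLp_toEuclideanCLM, dotProduct, mulVec, Finset.sum_mul, Pi.star_apply]
  rw [Finset.sum_comm]
  exact Finset.sum_congr rfl fun _ _ => Finset.sum_congr rfl fun _ _ => by ring

theorem conjTranspose_toMatrix_mul_mul_toMatrix_apply_eq_ite {B : Matrix ι ι 𝕜} {M : ℝ}
    (hB : ‖toEuclideanCLM (𝕜 := 𝕜) B‖ ≤ M) {b c : OrthonormalBasis ι 𝕜 (EuclideanSpace 𝕜 ι)}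
    {s : Set ι} (hbc : ∀ i ∈ s, toEuclideanCLM (𝕜 := 𝕜) B (b i) = (M : 𝕜) • c i) {i j : ι}
    (hij : i ∈ s ∨ j ∈ s) :
    (((EuclideanSpace.basisFun ι 𝕜).toBasis.toMatrix c)ᴴ * B *
      (EuclideanSpace.basisFun ι 𝕜).toBasis.toMatrix b) i j = if i = j then (M : 𝕜) else 0 := by
  rw [conjTranspose_toMatrix_mul_mul_toMatrix_apply]
  rcases hij with hi | hj
  · rw [← adjoint_inner_left, adjoint_apply_eq_smul_of_apply_eq_smul hB (by simp) (hbc i hi),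
      inner_smul_left, RCLike.conj_ofReal, orthonormal_iff_ite.mp b.orthonormal]
    simp
  · rw [hbc j hj, inner_smul_right, orthonormal_iff_ite.mp c.orthonormal]
    simp

end RCLike

variable {n : ℕ}

theorem differentiableOn_toEuclideanCLM {Ω : Set ℂ} {F : ℂ → Matrix (Fin n) (Fin n) ℂ}
    (hF : DifferentiableOn ℂ F Ω) :
    DifferentiableOn ℂ (fun z => toEuclideanCLM (𝕜 := ℂ) (F z)) Ω :=
  (LinearMap.toContinuousLinearMap
    (toEuclideanCLM (n := Fin n) (𝕜 := ℂ)).toAlgEquiv.toLinearMap).differentiable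
      |>.comp_differentiableOn hF

theorem mulVec_eqOn_of_euclNorm_mulVec_eq {Ω : Set ℂ} (hΩ : IsOpen Ω)
    (hΩc : IsPreconnected Ω) {F : ℂ → Matrix (Fin n) (Fin n) ℂ} (hF : DifferentiableOn ℂ F Ω)
    {z₀ : ℂ} (hz₀ : z₀ ∈ Ω) {M : ℝ} (hM : ∀ z ∈ Ω, opNorm (F z) ≤ M) {x : Fin n → ℂ}
    (hx : euclNorm (F z₀ *ᵥ x) = M * euclNorm x) : ∀ z ∈ Ω, F z *ᵥ x = F z₀ *ᵥ x := by
  rw [euclNorm_eq_norm_toLp, euclNorm_eq_norm_toLp, ← toEuclideanCLM_toLp] at hx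
  intro z hz
  simpa using Complex.eqOn_apply_of_norm_apply_eq hΩ hΩc (differentiableOn_toEuclideanCLM hF)
    hz₀ hM hx hz

theorem exists_orthonormalBasis_toEuclideanCLM_apply_eq_smul {Ω : Set ℂ} (hΩ : IsOpen Ω)
    (hΩc : IsPreconnected Ω) {F : ℂ → Matrix (Fin n) (Fin n) ℂ} (hF : DifferentiableOn ℂ F Ω)
    {z₀ : ℂ} (hz₀ : z₀ ∈ Ω) (hmax : ∀ z ∈ Ω, opNorm (F z) ≤ opNorm (F z₀))
    {S : Submodule ℂ (Fin n → ℂ)}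
    (hS : ∀ x ∈ S, euclNorm (F z₀ *ᵥ x) = opNorm (F z₀) * euclNorm x) :
    ∃ b c : OrthonormalBasis (Fin n) ℂ (EuclideanSpace ℂ (Fin n)),
      ∀ i : Fin n, i.val < finrank ℂ S → ∀ z ∈ Ω,
        toEuclideanCLM (𝕜 := ℂ) (F z) (b i) = (opNorm (F z₀) : ℂ) • c i := by
  obtain ⟨v, hv, hvS⟩ := (S.map (WithLp.linearEquiv 2 ℂ (Fin n → ℂ)).symm.toLinearMap)
    |>.exists_orthonormal_domRestrict_lt_finrank n
  rw [LinearEquiv.finrank_map_eq] at hv hvS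
  obtain ⟨b, c, hbc⟩ := exists_orthonormalBasis_apply_eq_smul (by simp)
    (T := toEuclideanCLM (𝕜 := ℂ) (F z₀)) (M := opNorm (F z₀)) le_rfl hv fun i hi => by
    obtain ⟨x, hx, hxv⟩ := Submodule.mem_map.mp (hvS i hi)
    have hv1 : ‖v i‖ = 1 := hv.1 ⟨i, hi⟩
    have hvx : v i = WithLp.toLp 2 x := hxv.symm
    rw [hvx] at hv1 ⊢
    rw [toEuclideanCLM_toLp, ← euclNorm_eq_norm_toLp, hS x hx, euclNorm_eq_norm_toLp, hv1,
      mul_one]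
  refine ⟨b, c, fun i hi z hz => ?_⟩
  refine (Complex.eqOn_apply_of_norm_apply_eq hΩ hΩc (differentiableOn_toEuclideanCLM hF) hz₀
    hmax ?_ hz).trans (hbc i hi)
  have hM : 0 ≤ opNorm (F z₀) := norm_nonneg _
  simp [hbc i hi, norm_smul, hM]

theorem exists_unitary_conjTranspose_mul_mul_conjTranspose_apply_eq_ite {Ω : Set ℂ}
    (hΩ : IsOpen Ω) (hΩc : IsPreconnected Ω) {F : ℂ → Matrix (Fin n) (Fin n) ℂ}
    (hF : DifferentiableOn ℂ F Ω) {z₀ : ℂ} (hz₀ : z₀ ∈ Ω)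
    (hmax : ∀ z ∈ Ω, opNorm (F z) ≤ opNorm (F z₀)) {S : Submodule ℂ (Fin n → ℂ)}
    (hS : ∀ x ∈ S, euclNorm (F z₀ *ᵥ x) = opNorm (F z₀) * euclNorm x) :
    ∃ U V : Matrix (Fin n) (Fin n) ℂ,
      Uᴴ * U = 1 ∧ U * Uᴴ = 1 ∧ Vᴴ * V = 1 ∧ V * Vᴴ = 1 ∧
      ∀ z ∈ Ω, ∀ i j : Fin n, i.val < finrank ℂ S ∨ j.val < finrank ℂ S →
        (Uᴴ * F z * Vᴴ) i j = if i = j then (opNorm (F z₀) : ℂ) else 0 := by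
  obtain ⟨b, c, hbc⟩ :=
    exists_orthonormalBasis_toEuclideanCLM_apply_eq_smul hΩ hΩc hF hz₀ hmax hS
  set std := (EuclideanSpace.basisFun (Fin n) ℂ).toBasis
  refine ⟨std.toMatrix c, (std.toMatrix b)ᴴ,
    OrthonormalBasis.toMatrix_orthonormalBasis_conjTranspose_mul_self _ c,
    OrthonormalBasis.toMatrix_orthonormalBasis_self_mul_conjTranspose _ c, ?_, ?_,
    fun z hz i j hij => ?_⟩
  · rw [conjTranspose_conjTranspose]
    exact OrthonormalBasis.toMatrix_orthonormalBasis_self_mul_conjTranspose _ b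
  · rw [conjTranspose_conjTranspose]
    exact OrthonormalBasis.toMatrix_orthonormalBasis_conjTranspose_mul_self _ b
  · rw [conjTranspose_conjTranspose]
    exact conjTranspose_toMatrix_mul_mul_toMatrix_apply_eq_ite (hmax z hz)
      (fun i hi => hbc i hi z hz) hij

end Matrix

/-- If `F` is analytic on a region `Ω` and its operator norm attains its maximum at `z₀ ∈ Ω`,
let `d` be the dimension of the subspace `S = {x : ‖F z₀ x‖ = ‖F z₀‖ ⬝ ‖x‖}` of maximizing
vectors.  Then there are constant unitary `U`, `V` with `F z = ‖F z₀‖ • (U * V)` when `d = n`,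
and `F z = U * [[‖F z₀‖ • I_d, 0], [0, R z]] * V` for some analytic
`R : Ω → M_{n-d}(ℂ)` when `d < n`.  In particular, for every maximizing vector `x`, the map
`z ↦ F z x` is constant on `Ω` and `F⁽ᵏ⁾(z₀) x = 0` for all `k ≥ 1`. -/
theorem maximum_operator_norm_full_factorization {n : ℕ} (Ω : Set ℂ) (hΩ : IsOpen Ω)
    (hconn : IsConnected Ω) (F : ℂ → Matrix (Fin n) (Fin n) ℂ)
    (hF : ∀ z ∈ Ω, DifferentiableAt ℂ F z) (z₀ : ℂ) (hz₀ : z₀ ∈ Ω)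
    (hmax : ∀ z ∈ Ω, opNorm (F z) ≤ opNorm (F z₀))
    (S : Submodule ℂ (Fin n → ℂ))
    (hS : (S : Set (Fin n → ℂ)) =
      {x | euclNorm ((F z₀).mulVec x) = opNorm (F z₀) * euclNorm x})
    (d : ℕ) (hd : d = Module.finrank ℂ S) :
    (∃ U V : Matrix (Fin n) (Fin n) ℂ,
      Uᴴ * U = 1 ∧ U * Uᴴ = 1 ∧ Vᴴ * V = 1 ∧ V * Vᴴ = 1 ∧
      (d = n → ∀ z ∈ Ω, F z = (opNorm (F z₀) : ℂ) • (U * V)) ∧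
      (∀ hlt : d < n, ∃ R : ℂ → Matrix (Fin (n - d)) (Fin (n - d)) ℂ,
        (∀ z ∈ Ω, DifferentiableAt ℂ R z) ∧
        ∀ z ∈ Ω,
          F z = U * (Matrix.reindex
            (finSumFinEquiv.trans (finCongr (Nat.add_sub_cancel' hlt.le)))
            (finSumFinEquiv.trans (finCongr (Nat.add_sub_cancel' hlt.le)))
            (Matrix.fromBlocks (Matrix.diagonal fun _ : Fin d => (opNorm (F z₀) : ℂ))
              0 0 (R z))) * V)) ∧
    ∀ x : Fin n → ℂ, euclNorm ((F z₀).mulVec x) = opNorm (F z₀) * euclNorm x →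
      (∀ z ∈ Ω, (F z).mulVec x = (F z₀).mulVec x) ∧
      ∀ k : ℕ, 1 ≤ k → (iteratedDeriv k F z₀).mulVec x = 0 := by
  have hFd : DifferentiableOn ℂ F Ω := fun z hz => (hF z hz).differentiableWithinAt
  have hconst (x : Fin n → ℂ) (hx : euclNorm (F z₀ *ᵥ x) = opNorm (F z₀) * euclNorm x) :
      ∀ z ∈ Ω, F z *ᵥ x = F z₀ *ᵥ x :=
    Matrix.mulVec_eqOn_of_euclNorm_mulVec_eq hΩ hconn.isPreconnected hFd hz₀ hmax hx
  refine ⟨?_, fun x hx => ⟨hconst x hx, fun k hk =>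
    Matrix.iteratedDeriv_mulVec_eq_zero (hFd.analyticAt (hΩ.mem_nhds hz₀)).contDiffAt
      (by omega) (Filter.eventually_of_mem (hΩ.mem_nhds hz₀) (hconst x hx))⟩⟩
  obtain ⟨U, V, hU', hU, hV', hV, hK⟩ :=
    Matrix.exists_unitary_conjTranspose_mul_mul_conjTranspose_apply_eq_ite hΩ
      hconn.isPreconnected hFd hz₀ hmax fun x hx => by rwa [← SetLike.mem_coe, hS] at hx
  rw [← hd] at hK
  have hFK (z : ℂ) : F z = U * (Uᴴ * F z * Vᴴ) * V :=
    calc F z = U * Uᴴ * F z * (Vᴴ * V) := by rw [hU, hV', Matrix.one_mul, Matrix.mul_one]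
      _ = U * (Uᴴ * F z * Vᴴ) * V := by simp only [Matrix.mul_assoc]
  refine ⟨U, V, hU', hU, hV', hV, fun hdn z hz => ?_, fun hlt => ?_⟩
  · have hKM : Uᴴ * F z * Vᴴ = (opNorm (F z₀) : ℂ) • 1 := by
      ext i j
      rw [hK z hz i j (.inl (hdn ▸ i.isLt))]
      simp [Matrix.one_apply]
    rw [hFK z, hKM, Matrix.mul_smul, Matrix.mul_one, Matrix.smul_mul]
  · set e := finSumFinEquiv.trans (finCongr (Nat.add_sub_cancel' hlt.le))
    refine ⟨fun z => (Uᴴ * F z * Vᴴ).submatrix (e ∘ .inr) (e ∘ .inr),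
      fun z hz => (hF z hz).matrix_submatrix_mul_mul _ _ _ _, fun z hz => ?_⟩
    rw [hFK z, ← Matrix.eq_reindex_fromBlocks_diagonal e _ _ (s := {i | i.val < d})
      (fun i => by simp [e]) (hK z hz)]
end

section
/- Let A ∈ M_n(ℂ) and let Ω be a region (nonempty open connected subset) of ℂ \ σ(A), where σ(A) is the spectrum of A. Then the operator norm of the resolvent R_A(z) = (A − zI)⁻¹ does not attain a maximum on Ω: there is no point z₀ ∈ Ω with ‖R_A(z)‖ ≤ ‖R_A(z₀)‖ for all z ∈ Ω. Equivalently, ‖R_A(z)‖ < sup_{ζ∈Ω} ‖R_A(ζ)‖ for every z ∈ Ω. -/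
/-
If `‖R_A(z)‖` peaked at `z₀ ∈ Ω`, choose `v` with `‖v‖ ≤ 1` and `‖R_A(z₀) v‖ = ‖R_A(z₀)‖`. The
vector-valued holomorphic map `z ↦ R_A(z) v` then has maximal norm at `z₀`; since the Euclidean
norm is strictly convex, the maximum modulus principle makes it constant, say `w`, on `Ω`. But
`(A - z) w = v` for two distinct `z ∈ Ω` forces `w = 0`, hence `v = 0` and `R_A(z₀) = 0`, which is
absurd for an inverse.
-/

open scoped Matrix

attribute [local instance] Matrix.normedAddCommGroup Matrix.normedSpace

open Metric

theorem Ring.inverse_neg {M₀ : Type*} [MonoidWithZero M₀] [HasDistribNeg M₀] (x : M₀) :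
    Ring.inverse (-x) = -Ring.inverse x := by
  by_cases hx : IsUnit x
  · obtain ⟨u, rfl⟩ := hx
    rw [← Units.val_neg, Ring.inverse_unit, Ring.inverse_unit, inv_neg, Units.val_neg]
  · rw [Ring.inverse_non_unit x hx, Ring.inverse_non_unit (-x) (by rwa [IsUnit.neg_iff]), neg_zero]

theorem map_ringInverse {F M N : Type*} [MonoidWithZero M] [MonoidWithZero N] [EquivLike F M N]
    [MulEquivClass F M N] (f : F) (x : M) : f (Ring.inverse x) = Ring.inverse (f x) := by
  by_cases hx : IsUnit x
  · obtain ⟨u, rfl⟩ := hx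
    simpa using (Ring.inverse_unit (Units.map (f : M →* N) u)).symm
  · rw [Ring.inverse_non_unit x hx, Ring.inverse_non_unit (f x) (by rwa [isUnit_map_iff]), map_zero]

theorem IsOpen.exists_mem_ne {𝕜 : Type*} [NontriviallyNormedField 𝕜] {U : Set 𝕜} (hU : IsOpen U)
    {x : 𝕜} (hx : x ∈ U) : ∃ y ∈ U, y ≠ x :=
  ((eventually_nhdsWithin_of_eventually_nhds (hU.mem_nhds hx)).and
    (self_mem_nhdsWithin (s := {x}ᶜ))).exists

namespace ContinuousLinearMap

theorem exists_mem_closedBall_norm_apply_eq_opNorm {𝕜 E F : Type*} [DenselyNormedField 𝕜]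
    [NormedAddCommGroup E] [NormedSpace 𝕜 E] [ProperSpace E] [NormedAddCommGroup F]
    [NormedSpace 𝕜 F] (f : E →L[𝕜] F) : ∃ v ∈ closedBall (0 : E) 1, ‖f v‖ = ‖f‖ := by
  have hK : IsCompact ((fun x => ‖f x‖) '' closedBall (0 : E) 1) :=
    (isCompact_closedBall 0 1).image (continuous_norm.comp f.continuous)
  obtain ⟨v, hv, hfv⟩ := hK.sSup_mem ((nonempty_closedBall.2 zero_le_one).image _)
  exact ⟨v, hv, hfv.trans f.sSup_unitClosedBall_eq_norm⟩

section Resolvent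

variable {𝕜 E : Type*} [NormedField 𝕜] [NormedAddCommGroup E] [NormedSpace 𝕜 E]

theorem sub_apply_resolvent_apply {a : E →L[𝕜] E} {z : 𝕜} (hz : z ∈ resolventSet 𝕜 a) (v : E) :
    z • resolvent a z v - a (resolvent a z v) = v := by
  simpa [resolvent, Algebra.algebraMap_eq_smul_one] using
    congr($(Ring.mul_inverse_cancel _ (spectrum.mem_resolventSet_iff.1 hz)) v)

theorem eq_zero_of_resolvent_apply_eq {a : E →L[𝕜] E} {z₀ z₁ : 𝕜} (hz₀ : z₀ ∈ resolventSet 𝕜 a)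
    (hz₁ : z₁ ∈ resolventSet 𝕜 a) (hne : z₀ ≠ z₁) {v : E}
    (h : resolvent a z₀ v = resolvent a z₁ v) : v = 0 := by
  have h₀ := sub_apply_resolvent_apply hz₀ v
  have h₁ := sub_apply_resolvent_apply hz₁ v
  have hw : resolvent a z₀ v = 0 := by
    rw [← h] at h₁
    have : (z₀ - z₁) • resolvent a z₀ v = 0 := by
      rw [sub_eq_iff_eq_add] at h₀ h₁
      rw [sub_smul, sub_eq_zero, h₀, h₁]
    exact (smul_eq_zero.1 this).resolve_left (sub_ne_zero.2 hne)
  rw [← h₀, hw, map_zero, smul_zero, sub_zero]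

end Resolvent

theorem not_isMaxOn_norm_resolvent {E : Type*} [NormedAddCommGroup E] [NormedSpace ℂ E]
    [StrictConvexSpace ℝ E] [FiniteDimensional ℂ E] [Nontrivial E] (a : E →L[ℂ] E) {Ω : Set ℂ}
    (hΩ : IsOpen Ω) (hconn : IsPreconnected Ω) (hρ : Ω ⊆ resolventSet ℂ a) {z₀ : ℂ}
    (hz₀ : z₀ ∈ Ω) : ¬ IsMaxOn (fun z => ‖resolvent a z‖) Ω z₀ := by
  intro hmax
  have := FiniteDimensional.complete ℂ E
  obtain ⟨v, hv, hv_norm⟩ := (resolvent a z₀).exists_mem_closedBall_norm_apply_eq_opNorm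
  have hdiff : DifferentiableOn ℂ (fun z => resolvent a z v) Ω := fun z hz =>
    ((spectrum.hasDerivAt_resolvent_const_left (hρ hz)).differentiableAt.clm_apply
      (differentiableAt_const v)).differentiableWithinAt
  have hmax_v : IsMaxOn (norm ∘ fun z => resolvent a z v) Ω z₀ := fun z hz =>
    calc ‖resolvent a z v‖ ≤ ‖resolvent a z‖ * ‖v‖ := (resolvent a z).le_opNorm v
      _ ≤ ‖resolvent a z‖ := mul_le_of_le_one_right (norm_nonneg _) (mem_closedBall_zero_iff.1 hv)
      _ ≤ ‖resolvent a z₀ v‖ := hv_norm ▸ hmax hz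
  have hconst := Complex.eqOn_of_isPreconnected_of_isMaxOn_norm hconn hΩ hdiff hz₀ hmax_v
  obtain ⟨z₁, hz₁, hne⟩ := hΩ.exists_mem_ne hz₀
  have hv0 : v = 0 := eq_zero_of_resolvent_apply_eq (hρ hz₁) (hρ hz₀) hne (hconst hz₁)
  have : resolvent a z₀ = 0 := norm_eq_zero.1 (by rw [← hv_norm, hv0, map_zero, norm_zero])
  exact (spectrum.isUnit_resolvent.1 (hρ hz₀)).ne_zero this

end ContinuousLinearMap

theorem Matrix.resolventSet_toEuclideanCLM {𝕜 ι : Type*} [RCLike 𝕜] [Fintype ι] [DecidableEq ι]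
    (A : Matrix ι ι 𝕜) : resolventSet 𝕜 (Matrix.toEuclideanCLM (𝕜 := 𝕜) A) = (spectrum 𝕜 A)ᶜ := by
  rw [← compl_compl (resolventSet 𝕜 _), ← spectrum, AlgEquiv.spectrum_eq]

theorem opNorm_inv_sub_smul_one_eq_norm_resolvent {n : ℕ} (A : Matrix (Fin n) (Fin n) ℂ) (z : ℂ) :
    opNorm ((A - z • 1)⁻¹) = ‖resolvent (Matrix.toEuclideanCLM (𝕜 := ℂ) A) z‖ := by
  rw [opNorm, resolvent, ← neg_sub, Matrix.nonsing_inv_eq_ringInverse, Ring.inverse_neg, map_neg,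
    norm_neg, map_ringInverse, map_sub, map_smul, map_one, Algebra.algebraMap_eq_smul_one]

/-- The operator norm of the resolvent `R_A(z) = (A − z I)⁻¹` does not attain a maximum on any
region `Ω ⊆ ℂ \ σ(A)`: there is no `z₀ ∈ Ω` with `‖R_A z‖ ≤ ‖R_A z₀‖` for all `z ∈ Ω`. -/
theorem resolvent_opNorm_no_maximum {n : ℕ} (hn : 0 < n)
    (A : Matrix (Fin n) (Fin n) ℂ) (Ω : Set ℂ) (hΩσ : Ω ⊆ (spectrum ℂ A)ᶜ)
    (hΩ : IsOpen Ω) (hconn : IsConnected Ω) :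
    ¬ ∃ z₀ ∈ Ω, ∀ z ∈ Ω,
        opNorm ((A - z • (1 : Matrix (Fin n) (Fin n) ℂ))⁻¹) ≤
          opNorm ((A - z₀ • (1 : Matrix (Fin n) (Fin n) ℂ))⁻¹) := by
  rintro ⟨z₀, hz₀, hmax⟩
  have : Nonempty (Fin n) := ⟨⟨0, hn⟩⟩
  refine (Matrix.toEuclideanCLM (𝕜 := ℂ) A).not_isMaxOn_norm_resolvent hΩ hconn.isPreconnected
    (A.resolventSet_toEuclideanCLM ▸ hΩσ) hz₀ fun z hz => ?_
  simpa only [Set.mem_ofPred_eq, opNorm_inv_sub_smul_one_eq_norm_resolvent] using hmax z hz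
end
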